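/- With A_j defined as above, the spectral norm of the commutator [A_1, A_{j'}] is at most 1 for every j' > 1, and consequently Σ_{j<j'} ‖[A_j, A_{j'}]‖ ≤ n − 1. -/

import Mathlib

open Matrix Complex
noncomputable section


open Matrix Complex

section Helpers

lemma mod_shift_up {J v a : ℕ} (hJ : 0 < J) (h : v % J + a < J) :
    (v + a) % J = v % J + a := by
  have h1 := Nat.div_add_mod v J
  have h3 : v + a = J * (v / J) + (v % J + a) := by omega
  rw [h3, Nat.mul_add_mod, Nat.mod_eq_of_lt h]

lemma mod_shift_down {J v a : ℕ} (hJ : 0 < J) (h : a ≤ v % J) :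
    (v - a) % J = v % J - a := by
  have h2 : v % J < J := Nat.mod_lt _ hJ
  have h1 := Nat.div_add_mod v J
  have h3 : v - a = J * (v / J) + (v % J - a) := by omega
  rw [h3, Nat.mul_add_mod, Nat.mod_eq_of_lt (by omega)]

lemma succ_mod_cond {J H v : ℕ} (hJ : J = 2 * H) (hH : 2 ≤ H) :
    ((v + 1) % J + 1 = H) ↔ (v % J + 2 = H) := by
  have h2 : v % J < J := Nat.mod_lt _ (by omega)
  by_cases h : v % J + 1 < J
  · rw [mod_shift_up (by omega) h]
  · have h3 : v + 1 = J * (v / J) + J := by have := Nat.div_add_mod v J; omega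
    have h4 : (v + 1) % J = 0 := by
      rw [h3, show J * (v / J) + J = J * (v / J + 1) by ring, Nat.mul_mod_right]
    omega

lemma pred_mod_zero {J u : ℕ} (hJ : 0 < J) (hu : 1 ≤ u) (h : u % J = 0) :
    (u - 1) % J = J - 1 := by
  have h1 : u = J * (u / J) := by have := Nat.div_add_mod u J; omega
  have h2 : 1 ≤ u / J := by
    rcases Nat.eq_zero_or_pos (u / J) with h3 | h3
    · rw [h3, Nat.mul_zero] at h1; omega
    · exact h3
  have h4 : J * (u / J) = J * (u / J - 1) + J := by
    rw [← Nat.mul_succ]; congr 1; omega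
  have h5 : u - 1 = J * (u / J - 1) + (J - 1) := by omega
  rw [h5, Nat.mul_add_mod, Nat.mod_eq_of_lt (by omega)]

lemma pred_cond {J H u : ℕ} (hJ : J = 2 * H) (hH : 2 ≤ H) (hu : 1 ≤ u) :
    ((u - 1) % J + 1 = H) ↔ u % J = H := by
  have hJ0 : 0 < J := by omega
  have h2 : u % J < J := Nat.mod_lt _ hJ0
  by_cases h : u % J = 0
  · rw [pred_mod_zero hJ0 hu h]; omega
  · rw [mod_shift_down hJ0 (by omega : 1 ≤ u % J)]; omega

lemma pred_of_dvd {a b : ℕ} (h : a ∣ b) (hb : 0 < b) (ha : 0 < a) :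
    (b - 1) % a = a - 1 := by
  obtain ⟨q, rfl⟩ := h
  have hq : 1 ≤ q := by
    rcases Nat.eq_zero_or_pos q with h3 | h3
    · subst h3; simp at hb
    · exact h3
  have h4 : a * q = a * (q - 1) + a := by rw [← Nat.mul_succ]; congr 1; omega
  have h5 : a * q - 1 = a * (q - 1) + (a - 1) := by omega
  rw [h5, Nat.mul_add_mod, Nat.mod_eq_of_lt (by omega)]

lemma add_lt_of_mod {J N v a : ℕ} (hJ0 : 0 < J) (hd : J ∣ N) (hv : v < N)
    (h : v % J + a < J) : v + a < N := by
  have h1 := Nat.div_add_mod v J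
  have h2 : v / J < N / J := Nat.div_lt_div_of_lt_of_dvd hd hv
  have h3 : J * (v / J + 1) ≤ J * (N / J) := Nat.mul_le_mul_left _ h2
  have h4 : J * (N / J) = N := Nat.mul_div_cancel' hd
  have h5 : J * (v / J + 1) = J * (v / J) + J := by ring
  omega

lemma tens_cond {b v w : ℕ} (hb : 0 < b) :
    (v / b / 2 = w / b / 2 ∧ (v / b % 2 = 0 ∧ w / b % 2 = 1) ∧ (v % b + 1 = b ∧ w % b = 0))
      ↔ (w = v + 1 ∧ v % (b * 2) + 1 = b) := by
  have hv := Nat.div_add_mod v b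
  have hw := Nat.div_add_mod w b
  have hv2 := Nat.div_add_mod (v / b) 2
  have hw2 := Nat.div_add_mod (w / b) 2
  have hvm : v % (b * 2) = v % b + b * (v / b % 2) := Nat.mod_mul
  have hvb : v % b < b := Nat.mod_lt _ hb
  have hwb : w % b < b := Nat.mod_lt _ hb
  constructor
  · rintro ⟨h1, ⟨h2, h3⟩, h4, h5⟩
    have h6 : w / b = v / b + 1 := by omega
    have h7 : b * (w / b) = b * (v / b) + b := by rw [h6, Nat.mul_add, Nat.mul_one]
    constructor
    · omega
    · rw [hvm, h2]; omega
  · rintro ⟨rfl, h1⟩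
    rw [hvm] at h1
    have h3 : v / b % 2 < 2 := Nat.mod_lt _ (by norm_num)
    have h4 : v / b % 2 = 0 := by
      rcases Nat.mod_two_eq_zero_or_one (v / b) with h | h
      · exact h
      · rw [h, Nat.mul_one] at h1; omega
    rw [h4, Nat.mul_zero, Nat.add_zero] at h1
    have h5 : v + 1 = b * (v / b + 1) := by rw [Nat.mul_add, Nat.mul_one]; omega
    have h6 : (v + 1) / b = v / b + 1 := by rw [h5, Nat.mul_div_cancel_left _ hb]
    have h7 : (v + 1) % b = 0 := by rw [h5]; exact Nat.mul_mod_right _ _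
    refine ⟨?_, ⟨h4, ?_⟩, ⟨h1, h7⟩⟩
    · rw [h6]; omega
    · rw [h6]; omega

end Helpers



lemma tens_bpos {a b : ℕ} (i : Fin (a * b)) : 0 < b :=
  Nat.pos_of_ne_zero fun h => absurd i.isLt (by simp [h])

/-- Kronecker (tensor) product of square matrices, with the leftmost factor acting on
the most significant part of the index. -/
def tens {a b : ℕ} (A : Matrix (Fin a) (Fin a) ℂ) (B : Matrix (Fin b) (Fin b) ℂ) :
    Matrix (Fin (a * b)) (Fin (a * b)) ℂ := fun i j =>
  A ⟨i.val / b, Nat.div_lt_of_lt_mul (i.isLt.trans_eq (Nat.mul_comm a b))⟩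
      ⟨j.val / b, Nat.div_lt_of_lt_mul (j.isLt.trans_eq (Nat.mul_comm a b))⟩ *
    B ⟨i.val % b, Nat.mod_lt _ (tens_bpos i)⟩ ⟨j.val % b, Nat.mod_lt _ (tens_bpos j)⟩

def I2 : Matrix (Fin 2) (Fin 2) ℂ := 1
def s00 : Matrix (Fin 2) (Fin 2) ℂ := !![1, 0; 0, 0]
def s01 : Matrix (Fin 2) (Fin 2) ℂ := !![0, 1; 0, 0]
def s10 : Matrix (Fin 2) (Fin 2) ℂ := !![0, 0; 1, 0]
def s11 : Matrix (Fin 2) (Fin 2) ℂ := !![0, 0; 0, 1]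
def pauliX : Matrix (Fin 2) (Fin 2) ℂ := !![0, 1; 1, 0]
def pauliZ : Matrix (Fin 2) (Fin 2) ℂ := !![1, 0; 0, -1]

/-- `k`-fold tensor power of a one-qubit operator. -/
def tensPow (M : Matrix (Fin 2) (Fin 2) ℂ) : (k : ℕ) → Matrix (Fin (2 ^ k)) (Fin (2 ^ k)) ℂ
  | 0 => 1
  | k + 1 => tens (tensPow M k) M

lemma pow_split {n j : ℕ} (h1 : 1 ≤ j) (h2 : j ≤ n) :
    2 ^ (n - j) * 2 * 2 ^ (j - 1) = 2 ^ n := by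
  rw [mul_assoc, ← pow_succ', ← pow_add]; congr 1; omega

lemma two_pow_split {j : ℕ} (h : 1 ≤ j) : 2 * 2 ^ (j - 1) = 2 ^ j := by
  rw [← pow_succ']; congr 1; omega

/-- The backward shift operator `S⁻` : entries `S⁻[k-1,k] = 1`. -/
def Sminus (n : ℕ) : Matrix (Fin (2 ^ n)) (Fin (2 ^ n)) ℂ := fun i j =>
  if i.val + 1 = j.val then 1 else 0

/-- The forward shift operator `S⁺` : entries `S⁺[k,k-1] = 1`. -/
def Splus (n : ℕ) : Matrix (Fin (2 ^ n)) (Fin (2 ^ n)) ℂ := fun i j =>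
  if j.val + 1 = i.val then 1 else 0

/-- `A_j = i·I^⊗(n-j) ⊗ (σ₀₁ ⊗ σ₁₀^⊗(j-1) − σ₁₀ ⊗ σ₀₁^⊗(j-1))` acting on `(ℂ²)^⊗n`. -/
def Amat (n j : ℕ) : Matrix (Fin (2 ^ n)) (Fin (2 ^ n)) ℂ :=
  if h : 1 ≤ j ∧ j ≤ n then
    Complex.I • (Matrix.reindex (finCongr (pow_split h.1 h.2)) (finCongr (pow_split h.1 h.2))
      (tens (tens (tensPow I2 (n - j)) s01) (tensPow s10 (j - 1)) -
        tens (tens (tensPow I2 (n - j)) s10) (tensPow s01 (j - 1))))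
  else 0

/-- Spectral (operator) norm of a square complex matrix. -/
def specNorm {m : ℕ} (M : Matrix (Fin m) (Fin m) ℂ) : ℝ :=
  ‖Matrix.toEuclideanCLM (𝕜 := ℂ) M‖



section Entries

lemma s01_apply (a b : Fin 2) : s01 a b = if a.val = 0 ∧ b.val = 1 then 1 else 0 := by
  fin_cases a <;> fin_cases b <;> simp [s01]

lemma s10_apply (a b : Fin 2) : s10 a b = if a.val = 1 ∧ b.val = 0 then 1 else 0 := by
  fin_cases a <;> fin_cases b <;> simp [s10]

lemma I2_apply (a b : Fin 2) : I2 a b = if a.val = b.val then 1 else 0 := by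
  fin_cases a <;> fin_cases b <;> simp [I2, Matrix.one_apply]

lemma tensPow_I2_apply (m : ℕ) (i k : Fin (2 ^ m)) :
    tensPow I2 m i k = if i.val = k.val then 1 else 0 := by
  induction m with
  | zero =>
    have hi : i.val = 0 := by omega
    have hk : k.val = 0 := by omega
    have : i = k := Fin.ext (by omega)
    subst this
    simp [tensPow, Matrix.one_apply, hi]
  | succ m ih =>
    show tens (tensPow I2 m) I2 i k = _
    simp only [tens, ih, I2_apply]
    split_ifs <;> first | ring1 | (exfalso; omega)

lemma tensPow_s10_apply (m : ℕ) (i k : Fin (2 ^ m)) :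
    tensPow s10 m i k = if i.val + 1 = 2 ^ m ∧ k.val = 0 then 1 else 0 := by
  induction m with
  | zero =>
    have hi : i.val = 0 := by omega
    have hk : k.val = 0 := by omega
    have : i = k := Fin.ext (by omega)
    subst this
    simp only [tensPow, Matrix.one_apply_eq, pow_zero]
    rw [if_pos ⟨by omega, hk⟩]
  | succ m ih =>
    show tens (tensPow s10 m) s10 i k = _
    simp only [tens, ih, s10_apply]
    have hp : (2:ℕ) ^ (m+1) = 2 * 2 ^ m := by ring
    have h0 : (0:ℕ) < 2 ^ m := Nat.pow_pos (by norm_num)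
    split_ifs <;> first | ring1 | (exfalso; omega)

lemma tensPow_s01_apply (m : ℕ) (i k : Fin (2 ^ m)) :
    tensPow s01 m i k = if i.val = 0 ∧ k.val + 1 = 2 ^ m then 1 else 0 := by
  induction m with
  | zero =>
    have hi : i.val = 0 := by omega
    have hk : k.val = 0 := by omega
    have : i = k := Fin.ext (by omega)
    subst this
    simp only [tensPow, Matrix.one_apply_eq, pow_zero]
    rw [if_pos ⟨hi, by omega⟩]
  | succ m ih =>
    show tens (tensPow s01 m) s01 i k = _
    simp only [tens, ih, s01_apply]
    have hp : (2:ℕ) ^ (m+1) = 2 * 2 ^ m := by ring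
    have h0 : (0:ℕ) < 2 ^ m := Nat.pow_pos (by norm_num)
    split_ifs <;> first | ring1 | (exfalso; omega)

def Efun (J H v w : ℕ) : ℂ := if w = v + 1 ∧ v % J + 1 = H then 1 else 0

def Afun (J H v w : ℕ) : ℂ := Complex.I * (Efun J H v w - Efun J H w v)

lemma ite_mul3 (P Q R : Prop) [Decidable P] [Decidable Q] [Decidable R] :
    ((if P then (1:ℂ) else 0) * (if Q then (1:ℂ) else 0)) * (if R then (1:ℂ) else 0)
      = if P ∧ Q ∧ R then 1 else 0 := by
  split_ifs <;> first | ring1 | (exfalso; tauto)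

lemma Amat_apply {n j : ℕ} (h1 : 1 ≤ j) (h2 : j ≤ n) (i k : Fin (2 ^ n)) :
    Amat n j i k = Afun (2 ^ j) (2 ^ (j - 1)) i.val k.val := by
  rw [Amat, dif_pos ⟨h1, h2⟩]
  rw [Matrix.smul_apply, Matrix.reindex_apply, Matrix.submatrix_apply, Matrix.sub_apply]
  simp only [tens, tensPow_I2_apply, tensPow_s10_apply, tensPow_s01_apply, s01_apply, s10_apply,
    finCongr_symm, finCongr_apply, Fin.coe_cast]
  rw [ite_mul3, ite_mul3, smul_eq_mul]
  have hb : 0 < 2 ^ (j - 1) := Nat.pow_pos (by norm_num)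
  have hbb : 2 ^ (j - 1) * 2 = 2 ^ j := by rw [mul_comm]; exact two_pow_split h1
  have e1 : ((i:ℕ) / 2 ^ (j - 1) / 2 = (k:ℕ) / 2 ^ (j - 1) / 2 ∧
      ((i:ℕ) / 2 ^ (j - 1) % 2 = 0 ∧ (k:ℕ) / 2 ^ (j - 1) % 2 = 1) ∧
      ((i:ℕ) % 2 ^ (j - 1) + 1 = 2 ^ (j - 1) ∧ (k:ℕ) % 2 ^ (j - 1) = 0)) ↔
      ((k : ℕ) = (i:ℕ) + 1 ∧ (i:ℕ) % 2 ^ j + 1 = 2 ^ (j - 1)) := by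
    rw [← hbb]; exact tens_cond hb
  have e2 : ((i:ℕ) / 2 ^ (j - 1) / 2 = (k:ℕ) / 2 ^ (j - 1) / 2 ∧
      ((i:ℕ) / 2 ^ (j - 1) % 2 = 1 ∧ (k:ℕ) / 2 ^ (j - 1) % 2 = 0) ∧
      ((i:ℕ) % 2 ^ (j - 1) = 0 ∧ (k:ℕ) % 2 ^ (j - 1) + 1 = 2 ^ (j - 1))) ↔
      ((i : ℕ) = (k:ℕ) + 1 ∧ (k:ℕ) % 2 ^ j + 1 = 2 ^ (j - 1)) := by
    rw [← hbb]
    have e2' := tens_cond (v := (k:ℕ)) (w := (i:ℕ)) hb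
    constructor
    · intro hx; exact e2'.mp ⟨hx.1.symm, ⟨hx.2.1.2, hx.2.1.1⟩, ⟨hx.2.2.2, hx.2.2.1⟩⟩
    · intro hx
      have hy := e2'.mpr hx
      exact ⟨hy.1.symm, ⟨hy.2.1.2, hy.2.1.1⟩, ⟨hy.2.2.2, hy.2.2.1⟩⟩
  simp only [Afun, Efun, e1, e2]

end Entries

section ZeroComm

lemma Afun_ne_zero_imp {J H v m : ℕ} (hJ : J = 2 * H) (hH : 1 ≤ H)
    (h : Afun J H v m ≠ 0) : m % J = H ∨ m % J + 1 = H := by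
  by_contra hc
  push_neg at hc
  apply h
  simp only [Afun, Efun]
  rw [if_neg, if_neg]
  · ring
  · rintro ⟨g1, g2⟩; exact hc.2 g2
  · rintro ⟨g1, g2⟩
    apply hc.1
    subst g1
    rw [mod_shift_up (by omega) (by omega)]
    omega

lemma Afun_eq_zero_of {J H m w : ℕ} (hJ : J = 2 * H) (hH : 1 ≤ H)
    (hm : ¬(m % J = H ∨ m % J + 1 = H)) : Afun J H m w = 0 := by
  push_neg at hm
  simp only [Afun, Efun]
  rw [if_neg, if_neg]
  · ring
  · rintro ⟨g1, g2⟩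
    apply hm.1
    subst g1
    rw [mod_shift_up (by omega) (by omega)]
    omega
  · rintro ⟨g1, g2⟩; exact hm.2 g2

lemma comm_zero {n j j' : ℕ} (h2 : 2 ≤ j) (hlt : j < j') (hn : j' ≤ n) :
    Amat n j * Amat n j' = 0 ∧ Amat n j' * Amat n j = 0 := by
  have hj1 : 1 ≤ j := by omega
  have hj'1 : 1 ≤ j' := by omega
  have hJj : (2:ℕ) ^ j = 2 * 2 ^ (j - 1) := (two_pow_split hj1).symm
  have hJj' : (2:ℕ) ^ j' = 2 * 2 ^ (j' - 1) := (two_pow_split hj'1).symm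
  have hHj2 : 2 ≤ (2:ℕ) ^ (j - 1) := by
    calc (2:ℕ) = 2 ^ 1 := rfl
    _ ≤ 2 ^ (j-1) := Nat.pow_le_pow_right (by norm_num) (by omega)
  have hHj1 : 1 ≤ (2:ℕ) ^ (j - 1) := by omega
  have hHj'1 : 1 ≤ (2:ℕ) ^ (j' - 1) := Nat.pow_pos (by norm_num)
  have hdvd : (2:ℕ) ^ j ∣ 2 ^ j' := pow_dvd_pow 2 (by omega)
  have hdvd2 : (2:ℕ) ^ j ∣ 2 ^ (j' - 1) := pow_dvd_pow 2 (by omega)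
  have hJj0 : 0 < (2:ℕ) ^ j := Nat.pow_pos (by norm_num)
  have main : ∀ m : ℕ, (m % 2 ^ j' = 2 ^ (j' - 1) ∨ m % 2 ^ j' + 1 = 2 ^ (j' - 1)) →
      ¬(m % 2 ^ j = 2 ^ (j - 1) ∨ m % 2 ^ j + 1 = 2 ^ (j - 1)) := by
    intro m hm
    have h1 : m % 2 ^ j = (m % 2 ^ j') % 2 ^ j := (Nat.mod_mod_of_dvd m hdvd).symm
    rcases hm with hm | hm
    · rw [hm] at h1
      have h3 : (2:ℕ) ^ (j' - 1) % 2 ^ j = 0 := Nat.eq_zero_of_dvd_of_lt hdvd2 |> fun _ => Nat.mod_eq_zero_of_dvd hdvd2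
      omega
    · have hm' : m % 2 ^ j' = 2 ^ (j' - 1) - 1 := by omega
      rw [hm'] at h1
      have h3 : ((2:ℕ) ^ (j' - 1) - 1) % 2 ^ j = 2 ^ j - 1 :=
        pred_of_dvd hdvd2 (by omega) hJj0
      omega
  constructor <;> ext i k <;> rw [Matrix.mul_apply, Matrix.zero_apply] <;>
    refine Finset.sum_eq_zero fun m _ => ?_
  · rw [Amat_apply hj1 (by omega), Amat_apply hj'1 hn]
    rcases eq_or_ne (Afun (2 ^ j) (2 ^ (j - 1)) i.val m.val) 0 with h | h
    · rw [h, zero_mul]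
    · have hm := Afun_ne_zero_imp hJj hHj1 h
      rw [Afun_eq_zero_of hJj' hHj'1 (fun hc => main m.val hc hm), mul_zero]
  · rw [Amat_apply hj1 (by omega), Amat_apply hj'1 hn]
    rcases eq_or_ne (Afun (2 ^ j') (2 ^ (j' - 1)) i.val m.val) 0 with h | h
    · rw [h, zero_mul]
    · have hm := Afun_ne_zero_imp hJj' hHj'1 h
      rw [Afun_eq_zero_of hJj hHj1 (main m.val hm), mul_zero]

end ZeroComm

section CEntry

lemma sum_left {N : ℕ} (hN : N % 2 = 0) (v : ℕ) (hv : v < N) (f : ℕ → ℂ) :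
    ∑ m : Fin N, Afun 2 1 v m.val * f m.val =
      if v % 2 = 0 then Complex.I * f (v + 1) else -Complex.I * f (v - 1) := by
  rcases Nat.mod_two_eq_zero_or_one v with hp | hp
  · rw [if_pos hp]
    have hlt : v + 1 < N := by omega
    rw [Finset.sum_eq_single (⟨v + 1, hlt⟩ : Fin N)]
    · have hA : Afun 2 1 v (v + 1) = Complex.I := by
        simp only [Afun, Efun]
        rw [if_pos ⟨trivial, by omega⟩, if_neg (by omega)]
        ring
      show Afun 2 1 v (v+1) * f (v+1) = _
      rw [hA]
    · intro m _ hm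
      have hm' : m.val ≠ v + 1 := fun h => hm (Fin.ext h)
      have hA : Afun 2 1 v m.val = 0 := by
        simp only [Afun, Efun]
        rw [if_neg (by omega), if_neg (by omega)]
        ring
      rw [hA, zero_mul]
    · intro h; exact absurd (Finset.mem_univ _) h
  · rw [if_neg (by omega)]
    have hlt : v - 1 < N := by omega
    rw [Finset.sum_eq_single (⟨v - 1, hlt⟩ : Fin N)]
    · have hA : Afun 2 1 v (v - 1) = -Complex.I := by
        simp only [Afun, Efun]
        rw [if_neg (by omega), if_pos ⟨by omega, by omega⟩]
        ring
      show Afun 2 1 v (v-1) * f (v-1) = _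
      rw [hA]
    · intro m _ hm
      have hm' : m.val ≠ v - 1 := fun h => hm (Fin.ext h)
      have hA : Afun 2 1 v m.val = 0 := by
        simp only [Afun, Efun]
        rw [if_neg (by omega), if_neg (by omega)]
        ring
      rw [hA, zero_mul]
    · intro h; exact absurd (Finset.mem_univ _) h

lemma sum_right {N : ℕ} (hN : N % 2 = 0) (w : ℕ) (hw : w < N) (f : ℕ → ℂ) :
    ∑ m : Fin N, f m.val * Afun 2 1 m.val w =
      if w % 2 = 0 then -Complex.I * f (w + 1) else Complex.I * f (w - 1) := by
  rcases Nat.mod_two_eq_zero_or_one w with hp | hp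
  · rw [if_pos hp]
    have hlt : w + 1 < N := by omega
    rw [Finset.sum_eq_single (⟨w + 1, hlt⟩ : Fin N)]
    · have hA : Afun 2 1 (w + 1) w = -Complex.I := by
        simp only [Afun, Efun]
        rw [if_neg (by omega), if_pos ⟨trivial, by omega⟩]
        ring
      show f (w+1) * Afun 2 1 (w+1) w = _
      rw [hA]; ring
    · intro m _ hm
      have hm' : m.val ≠ w + 1 := fun h => hm (Fin.ext h)
      have hA : Afun 2 1 m.val w = 0 := by
        simp only [Afun, Efun]
        rw [if_neg (by omega), if_neg (by omega)]
        ring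
      rw [hA, mul_zero]
    · intro h; exact absurd (Finset.mem_univ _) h
  · rw [if_neg (by omega)]
    have hlt : w - 1 < N := by omega
    rw [Finset.sum_eq_single (⟨w - 1, hlt⟩ : Fin N)]
    · have hA : Afun 2 1 (w - 1) w = Complex.I := by
        simp only [Afun, Efun]
        rw [if_pos ⟨by omega, by omega⟩, if_neg (by omega)]
        ring
      show f (w-1) * Afun 2 1 (w-1) w = _
      rw [hA]; ring
    · intro m _ hm
      have hm' : m.val ≠ w - 1 := fun h => hm (Fin.ext h)
      have hA : Afun 2 1 m.val w = 0 := by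
        simp only [Afun, Efun]
        rw [if_neg (by omega), if_neg (by omega)]
        ring
      rw [hA, mul_zero]
    · intro h; exact absurd (Finset.mem_univ _) h

variable {J H : ℕ}

lemma Efun_eq1 (hJ : J = 2 * H) (hH : 2 ≤ H) (u x : ℕ) :
    Efun J H (u + 1) x = if x = u + 2 ∧ u % J + 2 = H then 1 else 0 := by
  simp only [Efun]
  refine if_congr ?_ rfl rfl
  rw [succ_mod_cond hJ hH]

lemma Efun_eq2 (u x : ℕ) :
    Efun J H x (u + 1) = if u = x ∧ x % J + 1 = H then 1 else 0 := by
  simp only [Efun]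
  exact if_congr (by omega) rfl rfl

lemma Efun_eq3 (hJ : J = 2 * H) (hH : 2 ≤ H) (hu : 1 ≤ u) (x : ℕ) :
    Efun J H (u - 1) x = if x = u ∧ u % J = H then 1 else 0 := by
  simp only [Efun]
  refine if_congr ?_ rfl rfl
  rw [pred_cond hJ hH hu]
  omega

lemma Efun_eq4 (hu : 1 ≤ u) (x : ℕ) :
    Efun J H x (u - 1) = if u = x + 2 ∧ x % J + 1 = H then 1 else 0 := by
  simp only [Efun]
  exact if_congr (by omega) rfl rfl

lemma C_apply {n j' : ℕ} (hn : 1 ≤ n) (h2 : 2 ≤ j') (hj : j' ≤ n) (i k : Fin (2 ^ n)) :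
    (Amat n 1 * Amat n j' - Amat n j' * Amat n 1) i k =
      (if (k:ℕ) = (i:ℕ) + 2 ∧ (i:ℕ) % 2 ^ j' + 1 = 2 ^ (j' - 1) then 1 else 0)
      - (if (k:ℕ) = (i:ℕ) + 2 ∧ (i:ℕ) % 2 ^ j' + 2 = 2 ^ (j' - 1) then 1 else 0)
      - (if (i:ℕ) = (k:ℕ) + 2 ∧ (k:ℕ) % 2 ^ j' + 1 = 2 ^ (j' - 1) then 1 else 0)
      + (if (i:ℕ) = (k:ℕ) + 2 ∧ (k:ℕ) % 2 ^ j' + 2 = 2 ^ (j' - 1) then 1 else 0) := by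
  have hJ : (2:ℕ) ^ j' = 2 * 2 ^ (j' - 1) := (two_pow_split (by omega)).symm
  have hH2 : 2 ≤ (2:ℕ) ^ (j' - 1) := by
    calc (2:ℕ) = 2 ^ 1 := rfl
    _ ≤ 2 ^ (j'-1) := Nat.pow_le_pow_right (by norm_num) (by omega)
  have hN2 : (2:ℕ) ^ n % 2 = 0 := Nat.mod_eq_zero_of_dvd (dvd_pow_self 2 (by omega))
  have hpv : (i:ℕ) % 2 ^ j' % 2 = (i:ℕ) % 2 := Nat.mod_mod_of_dvd _ ⟨2 ^ (j' - 1), hJ⟩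
  have hpw : (k:ℕ) % 2 ^ j' % 2 = (k:ℕ) % 2 := Nat.mod_mod_of_dvd _ ⟨2 ^ (j' - 1), hJ⟩
  have hHe : (2:ℕ) ^ (j' - 1) % 2 = 0 := Nat.mod_eq_zero_of_dvd (dvd_pow_self 2 (by omega))
  have hII : ∀ z : ℂ, Complex.I * (Complex.I * z) = -z := fun z => by
    rw [← mul_assoc, Complex.I_mul_I]; ring
  have hII2 : ∀ z : ℂ, -Complex.I * (Complex.I * z) = z := fun z => by
    rw [← mul_assoc, neg_mul, Complex.I_mul_I]; ring
  rw [Matrix.sub_apply, Matrix.mul_apply, Matrix.mul_apply]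
  have hA1 : ∀ a b : Fin (2^n), Amat n 1 a b = Afun 2 1 a.val b.val := by
    intro a b
    have := Amat_apply (le_refl 1) hn a b
    simpa using this
  have hAj : ∀ a b : Fin (2^n), Amat n j' a b = Afun (2 ^ j') (2 ^ (j' - 1)) a.val b.val :=
    Amat_apply (by omega) hj
  simp only [hA1, hAj]
  rw [sum_left hN2 i.val i.isLt (fun u => Afun (2 ^ j') (2 ^ (j' - 1)) u k.val),
    sum_right hN2 k.val k.isLt (fun u => Afun (2 ^ j') (2 ^ (j' - 1)) i.val u)]
  rcases Nat.mod_two_eq_zero_or_one (i:ℕ) with hv | hv <;>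
    rcases Nat.mod_two_eq_zero_or_one (k:ℕ) with hw | hw
  · rw [if_pos hv, if_pos hw]
    simp only [Afun]
    rw [hII, hII2, Efun_eq1 hJ hH2, Efun_eq2, Efun_eq2, Efun_eq1 hJ hH2]
    split_ifs <;> first | ring1 | (exfalso; omega)
  · rw [if_pos hv, if_neg (by omega)]
    simp only [Afun]
    rw [hII, hII, Efun_eq1 hJ hH2, Efun_eq2, Efun_eq4 (by omega : 1 ≤ (k:ℕ)), Efun_eq3 hJ hH2 (by omega : 1 ≤ (k:ℕ))]
    split_ifs <;> first | ring1 | (exfalso; omega)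
  · rw [if_neg (by omega), if_pos hw]
    simp only [Afun]
    rw [hII2, hII2, Efun_eq3 hJ hH2 (by omega : 1 ≤ (i:ℕ)), Efun_eq4 (by omega : 1 ≤ (i:ℕ)), Efun_eq2, Efun_eq1 hJ hH2]
    split_ifs <;> first | ring1 | (exfalso; omega)
  · rw [if_neg (by omega), if_neg (by omega)]
    simp only [Afun]
    rw [hII2, hII, Efun_eq3 hJ hH2 (by omega : 1 ≤ (i:ℕ)), Efun_eq4 (by omega : 1 ≤ (i:ℕ)), Efun_eq4 (by omega : 1 ≤ (k:ℕ)), Efun_eq3 hJ hH2 (by omega : 1 ≤ (k:ℕ))]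
    split_ifs <;> first | ring1 | (exfalso; omega)

end CEntry

section NormBound

lemma specNorm_le_one {N : ℕ} (M : Matrix (Fin N) (Fin N) ℂ) (σ : Fin N → Fin N)
    (hrow : ∀ i k, k ≠ σ i → M i k = 0)
    (hval : ∀ i, ‖M i (σ i)‖ ≤ 1)
    (hinj : ∀ i i', M i (σ i) ≠ 0 → M i' (σ i') ≠ 0 → σ i = σ i' → i = i') :
    specNorm M ≤ 1 := by
  rw [specNorm]
  refine ContinuousLinearMap.opNorm_le_bound _ zero_le_one fun x => ?_
  rw [one_mul]
  have hTx : ∀ i, (Matrix.toEuclideanCLM (𝕜 := ℂ) M x) i = ∑ kk, M i kk * x kk := by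
    intro i
    rfl
  have hTi : ∀ i, (Matrix.toEuclideanCLM (𝕜 := ℂ) M x) i = M i (σ i) * x (σ i) := by
    intro i
    rw [hTx]
    refine Finset.sum_eq_single (σ i) (fun kk _ hkk => by rw [hrow i kk hkk, zero_mul])
      (fun h => absurd (Finset.mem_univ _) h)
  rw [EuclideanSpace.norm_eq, EuclideanSpace.norm_eq]
  apply Real.sqrt_le_sqrt
  calc ∑ i, ‖(Matrix.toEuclideanCLM (𝕜 := ℂ) M x) i‖ ^ 2
      = ∑ i, ‖M i (σ i) * x (σ i)‖ ^ 2 := by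
        refine Finset.sum_congr rfl fun i _ => by rw [hTi]
    _ = ∑ i ∈ Finset.univ.filter (fun i => M i (σ i) ≠ 0), ‖M i (σ i) * x (σ i)‖ ^ 2 := by
        refine (Finset.sum_filter_of_ne fun i _ h => ?_).symm
        intro h0
        apply h
        rw [h0, zero_mul, norm_zero]
        norm_num
    _ ≤ ∑ i ∈ Finset.univ.filter (fun i => M i (σ i) ≠ 0), ‖x (σ i)‖ ^ 2 := by
        refine Finset.sum_le_sum fun i _ => ?_
        rw [norm_mul, mul_pow]
        have h1 := hval i
        have h2 := norm_nonneg (M i (σ i))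
        have h4 : ‖M i (σ i)‖ ^ 2 ≤ 1 := by nlinarith
        calc ‖M i (σ i)‖ ^ 2 * ‖x (σ i)‖ ^ 2 ≤ 1 * ‖x (σ i)‖ ^ 2 :=
              mul_le_mul_of_nonneg_right h4 (by positivity)
          _ = ‖x (σ i)‖ ^ 2 := one_mul _
    _ = ∑ kk ∈ (Finset.univ.filter (fun i => M i (σ i) ≠ 0)).image σ, ‖x kk‖ ^ 2 := by
        rw [Finset.sum_image fun i hi i' hi' hh =>
          hinj i i' (Finset.mem_filter.mp hi).2 (Finset.mem_filter.mp hi').2 hh]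
    _ ≤ ∑ kk, ‖x kk‖ ^ 2 := by
        refine Finset.sum_le_sum_of_subset_of_nonneg (Finset.subset_univ _) fun kk _ _ => by positivity

end NormBound

section Main

lemma comm_norm_le {n j' : ℕ} (hn : 1 ≤ n) (h2 : 2 ≤ j') (hj : j' ≤ n) :
    specNorm (Amat n 1 * Amat n j' - Amat n j' * Amat n 1) ≤ 1 := by
  have hJ : (2:ℕ) ^ j' = 2 * 2 ^ (j' - 1) := (two_pow_split (by omega)).symm
  have hH2 : 2 ≤ (2:ℕ) ^ (j' - 1) := by
    calc (2:ℕ) = 2 ^ 1 := rfl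
    _ ≤ 2 ^ (j' - 1) := Nat.pow_le_pow_right (by norm_num) (by omega)
  set J := (2:ℕ) ^ j' with hJdef
  set H := (2:ℕ) ^ (j' - 1) with hHdef
  have hJ0 : 0 < J := by omega
  have hdvd : J ∣ 2 ^ n := pow_dvd_pow 2 hj
  have hbound : ∀ i : Fin (2 ^ n), ((i:ℕ) % J + 1 = H ∨ (i:ℕ) % J + 2 = H) → (i:ℕ) + 2 < 2 ^ n :=
    fun i hi => add_lt_of_mod hJ0 hdvd i.isLt (by omega)
  set σ : Fin (2 ^ n) → Fin (2 ^ n) := fun i =>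
    if h : (i:ℕ) % J + 1 = H ∨ (i:ℕ) % J + 2 = H then ⟨(i:ℕ) + 2, hbound i h⟩
    else ⟨(i:ℕ) - 2, by have := i.isLt; omega⟩ with hσ
  refine specNorm_le_one _ σ ?_ ?_ ?_
  · -- rows
    intro i k hk
    rw [C_apply hn h2 hj i k]
    by_cases c1 : (k:ℕ) = (i:ℕ) + 2 ∧ (i:ℕ) % J + 1 = H
    · exfalso; apply hk; apply Fin.ext
      show (k:ℕ) = (σ i : ℕ)
      rw [hσ]; simp only; rw [dif_pos (Or.inl c1.2)]; exact c1.1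
    · by_cases c2 : (k:ℕ) = (i:ℕ) + 2 ∧ (i:ℕ) % J + 2 = H
      · exfalso; apply hk; apply Fin.ext
        show (k:ℕ) = (σ i : ℕ)
        rw [hσ]; simp only; rw [dif_pos (Or.inr c2.2)]; exact c2.1
      · by_cases c3 : (i:ℕ) = (k:ℕ) + 2 ∧ (k:ℕ) % J + 1 = H
        · exfalso; apply hk; apply Fin.ext
          have hkm : ((k:ℕ) + 2) % J = (k:ℕ) % J + 2 := mod_shift_up hJ0 (by omega)
          have him : (i:ℕ) % J = H + 1 := by rw [c3.1, hkm]; omega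
          show (k:ℕ) = (σ i : ℕ)
          rw [hσ]; simp only; rw [dif_neg (by omega)]
          simp only [Fin.val_mk]; omega
        · by_cases c4 : (i:ℕ) = (k:ℕ) + 2 ∧ (k:ℕ) % J + 2 = H
          · exfalso; apply hk; apply Fin.ext
            have hkm : ((k:ℕ) + 2) % J = (k:ℕ) % J + 2 := mod_shift_up hJ0 (by omega)
            have him : (i:ℕ) % J = H := by rw [c4.1, hkm]; omega
            show (k:ℕ) = (σ i : ℕ)
            rw [hσ]; simp only; rw [dif_neg (by omega)]
            simp only [Fin.val_mk]; omega
          · rw [if_neg c1, if_neg c2, if_neg c3, if_neg c4]; ring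
  · -- values
    intro i
    rw [C_apply hn h2 hj i (σ i)]
    split_ifs <;> first | (exfalso; omega) | norm_num
  · -- injectivity
    intro i i' h h' heq
    have extract : ∀ b : Fin (2 ^ n),
        (Amat n 1 * Amat n j' - Amat n j' * Amat n 1) b (σ b) ≠ 0 →
        (((σ b : ℕ) = (b:ℕ) + 2 ∧ ((b:ℕ) % J + 1 = H ∨ (b:ℕ) % J + 2 = H)) ∨
         ((σ b : ℕ) + 2 = (b:ℕ) ∧ ((b:ℕ) % J = H ∨ (b:ℕ) % J = H + 1))) := by
      intro b hb
      rw [C_apply hn h2 hj b (σ b)] at hb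
      by_cases c1 : (σ b : ℕ) = (b:ℕ) + 2 ∧ (b:ℕ) % J + 1 = H
      · exact Or.inl ⟨c1.1, Or.inl c1.2⟩
      · by_cases c2 : (σ b : ℕ) = (b:ℕ) + 2 ∧ (b:ℕ) % J + 2 = H
        · exact Or.inl ⟨c2.1, Or.inr c2.2⟩
        · by_cases c3 : (b:ℕ) = (σ b : ℕ) + 2 ∧ (σ b : ℕ) % J + 1 = H
          · refine Or.inr ⟨by omega, Or.inr ?_⟩
            have hkm : ((σ b : ℕ) + 2) % J = (σ b : ℕ) % J + 2 := mod_shift_up hJ0 (by omega)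
            rw [c3.1, hkm]; omega
          · by_cases c4 : (b:ℕ) = (σ b : ℕ) + 2 ∧ (σ b : ℕ) % J + 2 = H
            · refine Or.inr ⟨by omega, Or.inl ?_⟩
              have hkm : ((σ b : ℕ) + 2) % J = (σ b : ℕ) % J + 2 := mod_shift_up hJ0 (by omega)
              rw [c4.1, hkm]; omega
            · exfalso; apply hb
              rw [if_neg c1, if_neg c2, if_neg c3, if_neg c4]; ring
    have hvals : (σ i : ℕ) = (σ i' : ℕ) := congrArg Fin.val heq
    rcases extract i h with ⟨e1, m1⟩ | ⟨e1, m1⟩ <;> rcases extract i' h' with ⟨e2, m2⟩ | ⟨e2, m2⟩ <;>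
      apply Fin.ext
    · omega
    · exfalso
      have hA : (σ i : ℕ) % J = (i:ℕ) % J + 2 := by rw [e1]; exact mod_shift_up hJ0 (by omega)
      have hB : (σ i' : ℕ) % J = (i':ℕ) % J - 2 := by
        have hv : (σ i' : ℕ) = (i':ℕ) - 2 := by omega
        rw [hv]; exact mod_shift_down hJ0 (by omega)
      rw [hvals] at hA
      omega
    · exfalso
      have hA : (σ i' : ℕ) % J = (i':ℕ) % J + 2 := by rw [e2]; exact mod_shift_up hJ0 (by omega)
      have hB : (σ i : ℕ) % J = (i:ℕ) % J - 2 := by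
        have hv : (σ i : ℕ) = (i:ℕ) - 2 := by omega
        rw [hv]; exact mod_shift_down hJ0 (by omega)
      rw [hvals] at hB
      omega
    · omega

/-- `‖[A₁, A_{j'}]‖ ≤ 1` for every `j' > 1`, and hence
`Σ_{j<j'} ‖[A_j, A_{j'}]‖ ≤ n − 1`. -/
theorem Amat_commutator_norm (n : ℕ) (hn : 1 ≤ n) :
    (∀ j' : ℕ, 1 < j' → j' ≤ n →
        specNorm (Amat n 1 * Amat n j' - Amat n j' * Amat n 1) ≤ 1) ∧
      ∑ j ∈ Finset.Icc 1 n, ∑ j' ∈ Finset.Icc (j + 1) n,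
          specNorm (Amat n j * Amat n j' - Amat n j' * Amat n j) ≤ (n : ℝ) - 1 := by
  constructor
  · intro j' h1 h2
    exact comm_norm_le hn (by omega) h2
  · have hsplit : Finset.Icc 1 n = insert 1 (Finset.Icc 2 n) := by
      ext a; simp [Finset.mem_Icc, Finset.mem_insert]; omega
    rw [hsplit, Finset.sum_insert (by simp)]
    have h0 : ∑ j ∈ Finset.Icc 2 n, ∑ j' ∈ Finset.Icc (j + 1) n,
        specNorm (Amat n j * Amat n j' - Amat n j' * Amat n j) = 0 := by
      refine Finset.sum_eq_zero fun j hj => Finset.sum_eq_zero fun j' hj' => ?_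
      rw [Finset.mem_Icc] at hj hj'
      obtain ⟨hz1, hz2⟩ := comm_zero hj.1 (by omega) hj'.2
      rw [hz1, hz2, sub_zero, specNorm]
      rw [map_zero, norm_zero]
    rw [h0, add_zero]
    have hle : ∑ j' ∈ Finset.Icc (1 + 1) n,
        specNorm (Amat n 1 * Amat n j' - Amat n j' * Amat n 1) ≤
        ∑ _j' ∈ Finset.Icc (1 + 1) n, (1 : ℝ) := by
      refine Finset.sum_le_sum fun j' hj' => ?_
      rw [Finset.mem_Icc] at hj'
      exact comm_norm_le hn hj'.1 hj'.2
    refine hle.trans ?_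
    rw [Finset.sum_const, Nat.card_Icc, nsmul_eq_mul, mul_one]
    have h4 : n + 1 - (1 + 1) = n - 1 := by omega
    rw [h4, Nat.cast_sub hn, Nat.cast_one]


end Main

end
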